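/- arXiv:2509.19040 — 2 statements merged into one kernel-verified Lean document; each statement's English description precedes it below -/
import Mathlib

section
/- Single time-point front-door identification: let U, L, A, M, Y be discrete random variables with joint pmf p satisfying (i) M ⫫ U | A, L; (ii) Y ⫫ A | U, M, L; and positivity. Then Σ_u E[Y | u, ℓ, a, m] p(u | ℓ) = Σ_{a'} E[Y | ℓ, a', m] p(a' | ℓ), i.e., the U-averaged outcome regression equals the front-door inner sum. -/
attribute [local instance] Classical.propDecidable

noncomputable section

/-- Probability of an event under pmf `w` on a finite sample space. -/
def Pr {Ω : Type} [Fintype Ω] (w : Ω → ℝ) (E : Ω → Prop) : ℝ :=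
  ∑ ω, if E ω then w ω else 0

/-- Conditional probability `P(E | F)`. -/
def cPr {Ω : Type} [Fintype Ω] (w : Ω → ℝ) (E F : Ω → Prop) : ℝ :=
  Pr w (fun ω => E ω ∧ F ω) / Pr w F

/-- Expectation of a real random variable. -/
def Exp {Ω : Type} [Fintype Ω] (w : Ω → ℝ) (Y : Ω → ℝ) : ℝ :=
  ∑ ω, Y ω * w ω

/-- Conditional expectation `E[Y | F]`. -/
def cExp {Ω : Type} [Fintype Ω] (w : Ω → ℝ) (Y : Ω → ℝ) (F : Ω → Prop) : ℝ :=
  (∑ ω, if F ω then Y ω * w ω else 0) / Pr w F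

section Helpers
variable {Ω : Type} [Fintype Ω]

theorem Pr_congr (w : Ω → ℝ) {E F : Ω → Prop} (h : ∀ ω, E ω ↔ F ω) :
    Pr w E = Pr w F :=
  Finset.sum_congr rfl fun ω _ => if_congr (h ω) rfl rfl

theorem cExp_eq (w Y : Ω → ℝ) (F : Ω → Prop) :
    cExp w Y F = Pr (fun ω => Y ω * w ω) F / Pr w F := rfl

theorem cExp_congr (w : Ω → ℝ) (Y : Ω → ℝ) {F F' : Ω → Prop} (h : ∀ ω, F ω ↔ F' ω) :
    cExp w Y F = cExp w Y F' := by
  rw [cExp_eq, cExp_eq, Pr_congr w h, Pr_congr (fun ω => Y ω * w ω) h]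

theorem Pr_pos_mono (w : Ω → ℝ) (hw : ∀ ω, 0 ≤ w ω) {E F : Ω → Prop}
    (h : ∀ ω, E ω → F ω) (hE : 0 < Pr w E) : 0 < Pr w F := by
  refine lt_of_lt_of_le hE (Finset.sum_le_sum fun ω _ => ?_)
  by_cases hEω : E ω
  · simp [hEω, h ω hEω]
  · simp only [hEω, if_false]
    split <;> simp [hw ω]

theorem sum_split {I : Type} [Fintype I] (f : Ω → ℝ) (X : Ω → I) (F : Ω → Prop) :
    ∑ i : I, Pr f (fun ω => X ω = i ∧ F ω) = Pr f F := by
  unfold Pr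
  rw [Finset.sum_comm]
  refine Finset.sum_congr rfl fun ω _ => ?_
  rw [Finset.sum_eq_single (X ω)]
  · simp
  · intro i _ hi
    rw [if_neg]
    rintro ⟨h1, _⟩
    exact hi (h1 ▸ rfl)
  · intro h; exact absurd (Finset.mem_univ _) h

theorem sum_split_image (f : Ω → ℝ) (Y : Ω → ℝ) (F : Ω → Prop) :
    ∑ y ∈ Finset.image Y Finset.univ, Pr f (fun ω => Y ω = y ∧ F ω) = Pr f F := by
  unfold Pr
  rw [Finset.sum_comm]
  refine Finset.sum_congr rfl fun ω _ => ?_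
  rw [Finset.sum_eq_single (Y ω)]
  · simp
  · intro y _ hy
    rw [if_neg]
    rintro ⟨h1, _⟩
    exact hy (h1 ▸ rfl)
  · intro h; exact absurd (Finset.mem_image_of_mem Y (Finset.mem_univ ω)) h

theorem pr_mul (w Y : Ω → ℝ) (F : Ω → Prop) (y : ℝ) :
    Pr (fun ω => Y ω * w ω) (fun ω => Y ω = y ∧ F ω)
      = y * Pr w (fun ω => Y ω = y ∧ F ω) := by
  unfold Pr
  rw [Finset.mul_sum]
  refine Finset.sum_congr rfl fun ω _ => ?_
  by_cases h : Y ω = y ∧ F ω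
  · simp [h, h.1]
  · simp [h]

theorem cExp_eq_sum (w : Ω → ℝ) (Y : Ω → ℝ) (F : Ω → Prop) :
    cExp w Y F = ∑ y ∈ Finset.image Y Finset.univ, y * cPr w (fun ω => Y ω = y) F := by
  rw [cExp_eq, ← sum_split_image (fun ω => Y ω * w ω) Y F, Finset.sum_div]
  refine Finset.sum_congr rfl fun y _ => ?_
  rw [pr_mul, mul_div_assoc]
  rfl

theorem cExp_eq_of_cPr_eq (w : Ω → ℝ) (Y : Ω → ℝ) {F G : Ω → Prop}
    (h : ∀ y, cPr w (fun ω => Y ω = y) F = cPr w (fun ω => Y ω = y) G) :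
    cExp w Y F = cExp w Y G := by
  rw [cExp_eq_sum, cExp_eq_sum]
  exact Finset.sum_congr rfl fun y _ => by rw [h y]

theorem div_mul_div_cancel0 (N P Q : ℝ) (hP : P ≠ 0) : N / P * (P / Q) = N / Q := by
  field_simp

theorem tower {I : Type} [Fintype I] (w Y : Ω → ℝ) (X : Ω → I) (F : Ω → Prop)
    (hXF : ∀ i, Pr w (fun ω => X ω = i ∧ F ω) ≠ 0) :
    cExp w Y F = ∑ i, cExp w Y (fun ω => X ω = i ∧ F ω) * cPr w (fun ω => X ω = i) F := by
  rw [eq_comm]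
  refine Eq.trans (Finset.sum_congr rfl fun i _ =>
    div_mul_div_cancel0 (Pr (fun ω => Y ω * w ω) (fun ω => X ω = i ∧ F ω))
      (Pr w (fun ω => X ω = i ∧ F ω)) (Pr w F) (hXF i)) ?_
  rw [← Finset.sum_div, sum_split (fun ω => Y ω * w ω) X F]
  rfl

end Helpers

/-- single time-point front-door identification step:
`Σ_u E[Y | u, ℓ, a, m] p(u | ℓ) = Σ_{a'} E[Y | ℓ, a', m] p(a' | ℓ)`. -/
theorem frontdoor_inner_sum
    {Ω 𝓤 𝓛 𝓐 𝓜 : Type} [Fintype Ω] [Fintype 𝓤] [Fintype 𝓐]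
    (w : Ω → ℝ) (hw : ∀ ω, 0 ≤ w ω) (hw1 : ∑ ω, w ω = 1)
    (U : Ω → 𝓤) (L : Ω → 𝓛) (A : Ω → 𝓐) (M : Ω → 𝓜) (Y : Ω → ℝ)
    -- positivity of all conditioning events
    (hpos : ∀ (u : 𝓤) (ℓ : 𝓛) (a : 𝓐) (m : 𝓜),
      0 < Pr w (fun ω => U ω = u ∧ L ω = ℓ ∧ A ω = a ∧ M ω = m))
    -- (i) M ⫫ U | A, L
    (hMU : ∀ (u : 𝓤) (ℓ : 𝓛) (a : 𝓐) (m : 𝓜),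
      cPr w (fun ω => M ω = m) (fun ω => U ω = u ∧ A ω = a ∧ L ω = ℓ)
        = cPr w (fun ω => M ω = m) (fun ω => A ω = a ∧ L ω = ℓ))
    -- (ii) Y ⫫ A | U, M, L (stated in terms of the pmf of Y)
    (hYA : ∀ (y : ℝ) (u : 𝓤) (ℓ : 𝓛) (a : 𝓐) (m : 𝓜),
      cPr w (fun ω => Y ω = y) (fun ω => U ω = u ∧ M ω = m ∧ L ω = ℓ ∧ A ω = a)
        = cPr w (fun ω => Y ω = y) (fun ω => U ω = u ∧ M ω = m ∧ L ω = ℓ)) :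
    ∀ (ℓ : 𝓛) (a : 𝓐) (m : 𝓜),
      ∑ u : 𝓤,
          cExp w Y (fun ω => U ω = u ∧ L ω = ℓ ∧ A ω = a ∧ M ω = m)
            * cPr w (fun ω => U ω = u) (fun ω => L ω = ℓ)
        = ∑ a' : 𝓐,
            cExp w Y (fun ω => L ω = ℓ ∧ A ω = a' ∧ M ω = m)
              * cPr w (fun ω => A ω = a') (fun ω => L ω = ℓ) := by
  intro ℓ a m
  have hΩ : Nonempty Ω := by
    by_contra h
    rw [not_nonempty_iff] at h
    rw [Finset.univ_eq_empty, Finset.sum_empty] at hw1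
    exact one_ne_zero hw1.symm
  obtain ⟨ω₀⟩ := hΩ
  -- positivity facts
  have hS : 0 < Pr w (fun ω => L ω = ℓ) :=
    Pr_pos_mono w hw (fun ω h => h.2.1) (hpos (U ω₀) ℓ a m)
  have hR : ∀ a' : 𝓐, 0 < Pr w (fun ω => A ω = a' ∧ L ω = ℓ) := fun a' =>
    Pr_pos_mono w hw (fun ω h => ⟨h.2.2.1, h.2.1⟩) (hpos (U ω₀) ℓ a' m)
  have hQ : ∀ (u : 𝓤) (a' : 𝓐), 0 < Pr w (fun ω => U ω = u ∧ A ω = a' ∧ L ω = ℓ) :=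
    fun u a' => Pr_pos_mono w hw (fun ω h => ⟨h.1, h.2.2.1, h.2.1⟩) (hpos u ℓ a' m)
  have hZ : ∀ a' : 𝓐, 0 < Pr w (fun ω => L ω = ℓ ∧ A ω = a' ∧ M ω = m) := fun a' =>
    Pr_pos_mono w hw (fun ω h => ⟨h.2.1, h.2.2.1, h.2.2.2⟩) (hpos (U ω₀) ℓ a' m)
  -- the regression that does not depend on a'
  have hstep : ∀ (u : 𝓤) (a' : 𝓐),
      cExp w Y (fun ω => U ω = u ∧ L ω = ℓ ∧ A ω = a' ∧ M ω = m)
        = cExp w Y (fun ω => U ω = u ∧ M ω = m ∧ L ω = ℓ) := by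
    intro u a'
    refine Eq.trans (cExp_congr w Y
      (F' := fun ω => U ω = u ∧ M ω = m ∧ L ω = ℓ ∧ A ω = a') (fun ω => by tauto)) ?_
    exact cExp_eq_of_cPr_eq w Y (fun y => hYA y u ℓ a' m)
  -- Bayes consequence of hMU
  have hB : ∀ (u : 𝓤) (a' : 𝓐),
      cPr w (fun ω => U ω = u) (fun ω => L ω = ℓ ∧ A ω = a' ∧ M ω = m)
        = Pr w (fun ω => U ω = u ∧ A ω = a' ∧ L ω = ℓ)
            / Pr w (fun ω => A ω = a' ∧ L ω = ℓ) := by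
    intro u a'
    have h0 : Pr w (fun ω => M ω = m ∧ (U ω = u ∧ A ω = a' ∧ L ω = ℓ))
          / Pr w (fun ω => U ω = u ∧ A ω = a' ∧ L ω = ℓ)
        = Pr w (fun ω => M ω = m ∧ (A ω = a' ∧ L ω = ℓ))
          / Pr w (fun ω => A ω = a' ∧ L ω = ℓ) := hMU u ℓ a' m
    have e1 : Pr w (fun ω => M ω = m ∧ (U ω = u ∧ A ω = a' ∧ L ω = ℓ))
        = Pr w (fun ω => U ω = u ∧ (L ω = ℓ ∧ A ω = a' ∧ M ω = m)) :=
      Pr_congr w fun ω => by tauto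
    have e2 : Pr w (fun ω => M ω = m ∧ (A ω = a' ∧ L ω = ℓ))
        = Pr w (fun ω => L ω = ℓ ∧ A ω = a' ∧ M ω = m) :=
      Pr_congr w fun ω => by tauto
    rw [e1, e2] at h0
    show Pr w (fun ω => U ω = u ∧ (L ω = ℓ ∧ A ω = a' ∧ M ω = m))
        / Pr w (fun ω => L ω = ℓ ∧ A ω = a' ∧ M ω = m)
      = Pr w (fun ω => U ω = u ∧ A ω = a' ∧ L ω = ℓ)
          / Pr w (fun ω => A ω = a' ∧ L ω = ℓ)
    rw [div_eq_div_iff (hQ u a').ne' (hR a').ne'] at h0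
    rw [div_eq_div_iff (hZ a').ne' (hR a').ne']
    linarith [h0]
  -- expand the RHS conditional expectations via the tower rule
  have hRHSterm : ∀ a' : 𝓐,
      cExp w Y (fun ω => L ω = ℓ ∧ A ω = a' ∧ M ω = m)
        = ∑ u : 𝓤, cExp w Y (fun ω => U ω = u ∧ M ω = m ∧ L ω = ℓ)
            * (Pr w (fun ω => U ω = u ∧ A ω = a' ∧ L ω = ℓ)
                / Pr w (fun ω => A ω = a' ∧ L ω = ℓ)) := by
    intro a'
    have hXF : ∀ u : 𝓤,
        Pr w (fun ω => U ω = u ∧ (L ω = ℓ ∧ A ω = a' ∧ M ω = m)) ≠ 0 :=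
      fun u => (hpos u ℓ a' m).ne'
    rw [tower w Y U (fun ω => L ω = ℓ ∧ A ω = a' ∧ M ω = m) hXF]
    refine Finset.sum_congr rfl fun u _ => ?_
    rw [hB u a']
    congr 1
    exact hstep u a'
  -- sum over a' of the joint equals the marginal
  have hT : ∀ u : 𝓤,
      ∑ a' : 𝓐, Pr w (fun ω => U ω = u ∧ A ω = a' ∧ L ω = ℓ)
        = Pr w (fun ω => U ω = u ∧ L ω = ℓ) := by
    intro u
    rw [← sum_split w A (fun ω => U ω = u ∧ L ω = ℓ)]
    exact Finset.sum_congr rfl fun a' _ => Pr_congr w fun ω => by tauto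
  -- put everything together
  calc
    ∑ u : 𝓤, cExp w Y (fun ω => U ω = u ∧ L ω = ℓ ∧ A ω = a ∧ M ω = m)
        * cPr w (fun ω => U ω = u) (fun ω => L ω = ℓ)
      = ∑ u : 𝓤, cExp w Y (fun ω => U ω = u ∧ M ω = m ∧ L ω = ℓ)
          * (Pr w (fun ω => U ω = u ∧ L ω = ℓ) / Pr w (fun ω => L ω = ℓ)) := by
        refine Finset.sum_congr rfl fun u _ => ?_
        rw [hstep u a]
        rfl
    _ = ∑ u : 𝓤, ∑ a' : 𝓐, cExp w Y (fun ω => U ω = u ∧ M ω = m ∧ L ω = ℓ)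
          * (Pr w (fun ω => U ω = u ∧ A ω = a' ∧ L ω = ℓ) / Pr w (fun ω => L ω = ℓ)) := by
        refine Finset.sum_congr rfl fun u _ => ?_
        rw [← Finset.mul_sum, ← Finset.sum_div, hT u]
    _ = ∑ a' : 𝓐, ∑ u : 𝓤, cExp w Y (fun ω => U ω = u ∧ M ω = m ∧ L ω = ℓ)
          * (Pr w (fun ω => U ω = u ∧ A ω = a' ∧ L ω = ℓ) / Pr w (fun ω => L ω = ℓ)) :=
        Finset.sum_comm
    _ = ∑ a' : 𝓐, (∑ u : 𝓤, cExp w Y (fun ω => U ω = u ∧ M ω = m ∧ L ω = ℓ)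
          * (Pr w (fun ω => U ω = u ∧ A ω = a' ∧ L ω = ℓ)
              / Pr w (fun ω => A ω = a' ∧ L ω = ℓ)))
          * (Pr w (fun ω => A ω = a' ∧ L ω = ℓ) / Pr w (fun ω => L ω = ℓ)) := by
        refine Finset.sum_congr rfl fun a' _ => ?_
        rw [Finset.sum_mul]
        refine Finset.sum_congr rfl fun u _ => ?_
        rw [mul_assoc]
        congr 1
        exact (div_mul_div_cancel0 _ _ _ (hR a').ne').symm
    _ = ∑ a' : 𝓐, cExp w Y (fun ω => L ω = ℓ ∧ A ω = a' ∧ M ω = m)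
          * cPr w (fun ω => A ω = a') (fun ω => L ω = ℓ) := by
        refine Finset.sum_congr rfl fun a' _ => ?_
        rw [hRHSterm a']
        rfl
end
end

section
/- Front-door formula (point treatment, discrete case): under the assumptions (i) M ⫫ U | A, L, (ii) Y ⫫ A | U, M, L, (iii) Y(a) ⫫ A | U, L, consistency (A = a implies Y(a) = Y a.s.), and positivity, the counterfactual mean satisfies E[Y(a)] = Σ_{ℓ, m} p(m | ℓ, a) [Σ_{a'} E[Y | ℓ, a', m] p(a' | ℓ)] p(ℓ). -/
attribute [local instance] Classical.propDecidable

noncomputable section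

namespace FD

variable {Ω : Type} [Fintype Ω]

def S (g : Ω → ℝ) (F : Ω → Prop) : ℝ := ∑ ω, if F ω then g ω else 0

lemma Pr_eq_S (w : Ω → ℝ) (F : Ω → Prop) : Pr w F = S w F := rfl

lemma S_congr {g : Ω → ℝ} {F G : Ω → Prop} (h : ∀ ω, F ω ↔ G ω) : S g F = S g G := by
  unfold S
  exact Finset.sum_congr rfl (fun ω _ => if_congr (h ω) rfl rfl)

lemma S_congr_on {g g' : Ω → ℝ} {F : Ω → Prop} (h : ∀ ω, F ω → g ω = g' ω) :
    S g F = S g' F := by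
  unfold S
  refine Finset.sum_congr rfl (fun ω _ => ?_)
  by_cases hF : F ω
  · simp [hF, h ω hF]
  · simp [hF]

lemma S_split {X : Type} [Fintype X] (g : Ω → ℝ) (F : Ω → Prop) (f : Ω → X) :
    S g F = ∑ x, S g (fun ω => F ω ∧ f ω = x) := by
  unfold S
  rw [Finset.sum_comm]
  refine Finset.sum_congr rfl (fun ω _ => ?_)
  by_cases hF : F ω
  · simp [hF]
  · simp [hF]

lemma S_value (Y w' : Ω → ℝ) (F : Ω → Prop) :
    S (fun ω => Y ω * w' ω) F
      = ∑ y ∈ Finset.image Y Finset.univ, y * S w' (fun ω => Y ω = y ∧ F ω) := by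
  unfold S
  simp only [Finset.mul_sum, mul_ite, mul_zero]
  rw [Finset.sum_comm]
  refine Finset.sum_congr rfl (fun ω _ => ?_)
  by_cases hF : F ω
  · simp only [hF, and_true]
    rw [Finset.sum_eq_single (Y ω)]
    · simp
    · intro y _ hy; rw [if_neg (fun h => hy h.symm)]
    · intro h; exact absurd (Finset.mem_image_of_mem Y (Finset.mem_univ ω)) h
  · simp [hF]

lemma cExp_eq_sum (w Y : Ω → ℝ) (F : Ω → Prop) :
    cExp w Y F = ∑ y ∈ Finset.image Y Finset.univ, y * cPr w (fun ω => Y ω = y) F := by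
  unfold cExp cPr
  rw [show (∑ ω, if F ω then Y ω * w ω else 0) = S (fun ω => Y ω * w ω) F from rfl,
    S_value, Finset.sum_div]
  exact Finset.sum_congr rfl (fun y _ => by rw [mul_div_assoc]; rfl)

lemma cExp_eq_of_cPr {w Y : Ω → ℝ} {F G : Ω → Prop}
    (h : ∀ y, cPr w (fun ω => Y ω = y) F = cPr w (fun ω => Y ω = y) G) :
    cExp w Y F = cExp w Y G := by
  rw [cExp_eq_sum, cExp_eq_sum]
  exact Finset.sum_congr rfl (fun y _ => by rw [h y])


lemma frontdoor_algebra {𝓤 𝓛 𝓜 : Type} [Fintype 𝓤] [Fintype 𝓛] [Fintype 𝓜]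
    [Nonempty 𝓤] [Nonempty 𝓛] [Nonempty 𝓜]
    (a : Bool) (p nY : 𝓤 → 𝓛 → Bool → 𝓜 → ℝ) (nYa : 𝓤 → 𝓛 → Bool → ℝ)
    (hp : ∀ u ℓ b m, 0 < p u ℓ b m)
    (h1 : ∀ u ℓ b m, p u ℓ b m * (∑ u', ∑ m', p u' ℓ b m')
        = (∑ m', p u ℓ b m') * (∑ u', p u' ℓ b m))
    (h2 : ∀ u ℓ b m, nY u ℓ b m * (∑ b', p u ℓ b' m) = p u ℓ b m * (∑ b', nY u ℓ b' m))
    (h3 : ∀ u ℓ b, nYa u ℓ b * (∑ b', ∑ m', p u ℓ b' m')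
        = (∑ m', p u ℓ b m') * (∑ b', nYa u ℓ b'))
    (h4 : ∀ u ℓ, nYa u ℓ a = ∑ m, nY u ℓ a m) :
    (∑ u, ∑ ℓ, ∑ b, nYa u ℓ b)
      = ∑ ℓ, ∑ m,
          ((∑ u, p u ℓ a m) / (∑ u, ∑ m', p u ℓ a m'))
            * (∑ b, ((∑ u, nY u ℓ b m) / (∑ u, p u ℓ b m))
                  * ((∑ u, ∑ m', p u ℓ b m') / (∑ u, ∑ b', ∑ m', p u ℓ b' m')))
            * (∑ u, ∑ b', ∑ m', p u ℓ b' m') := by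
  have hne : (Finset.univ : Finset 𝓤).Nonempty := Finset.univ_nonempty
  have hneL : (Finset.univ : Finset 𝓛).Nonempty := Finset.univ_nonempty
  have hneM : (Finset.univ : Finset 𝓜).Nonempty := Finset.univ_nonempty
  have hneB : (Finset.univ : Finset Bool).Nonempty := Finset.univ_nonempty
  have hULA : ∀ u ℓ b, 0 < ∑ m, p u ℓ b m := fun u ℓ b =>
    Finset.sum_pos (fun m _ => hp u ℓ b m) hneM
  have hMLA : ∀ ℓ b m, 0 < ∑ u, p u ℓ b m := fun ℓ b m =>
    Finset.sum_pos (fun u _ => hp u ℓ b m) hne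
  have hLA : ∀ ℓ b, 0 < ∑ u, ∑ m, p u ℓ b m := fun ℓ b =>
    Finset.sum_pos (fun u _ => hULA u ℓ b) hne
  have hPB : ∀ u ℓ m, 0 < ∑ b, p u ℓ b m := fun u ℓ m =>
    Finset.sum_pos (fun b _ => hp u ℓ b m) hneB
  have hUL : ∀ u ℓ, 0 < ∑ b, ∑ m, p u ℓ b m := fun u ℓ =>
    Finset.sum_pos (fun b _ => hULA u ℓ b) hneB
  have hL : ∀ ℓ, 0 < ∑ u, ∑ b, ∑ m, p u ℓ b m := fun ℓ =>
    Finset.sum_pos (fun u _ => hUL u ℓ) hne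
  obtain ⟨g, hgdef⟩ : ∃ g : 𝓤 → 𝓛 → 𝓜 → ℝ,
      g = fun u ℓ m => (∑ b, nY u ℓ b m) / (∑ b, p u ℓ b m) := ⟨_, rfl⟩
  have key2 : ∀ u ℓ b m, nY u ℓ b m = p u ℓ b m * g u ℓ m := by
    intro u ℓ b m
    rw [hgdef]
    show nY u ℓ b m = p u ℓ b m * ((∑ b', nY u ℓ b' m) / (∑ b', p u ℓ b' m))
    rw [← mul_div_assoc, eq_div_iff (ne_of_gt (hPB u ℓ m))]
    exact h2 u ℓ b m
  have key1 : ∀ u ℓ b m,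
      p u ℓ b m = (∑ m', p u ℓ b m') * (∑ u', p u' ℓ b m) / (∑ u', ∑ m', p u' ℓ b m') := by
    intro u ℓ b m
    rw [eq_div_iff (ne_of_gt (hLA ℓ b))]
    exact h1 u ℓ b m
  have hnYa_a : ∀ u ℓ, nYa u ℓ a
      = (∑ m', p u ℓ a m')
          * ∑ m, (∑ u', p u' ℓ a m) / (∑ u', ∑ m', p u' ℓ a m') * g u ℓ m := by
    intro u ℓ
    rw [h4, Finset.mul_sum]
    refine Finset.sum_congr rfl (fun m _ => ?_)
    rw [key2 u ℓ a m, key1 u ℓ a m]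
    ring
  have hT : ∀ u ℓ, (∑ b, nYa u ℓ b)
      = (∑ b, ∑ m', p u ℓ b m')
          * ∑ m, (∑ u', p u' ℓ a m) / (∑ u', ∑ m', p u' ℓ a m') * g u ℓ m := by
    intro u ℓ
    have h := h3 u ℓ a
    rw [hnYa_a u ℓ] at h
    set X := ∑ m, (∑ u', p u' ℓ a m) / (∑ u', ∑ m', p u' ℓ a m') * g u ℓ m with hX
    have h' : (∑ m', p u ℓ a m') * (X * (∑ b', ∑ m', p u ℓ b' m'))
        = (∑ m', p u ℓ a m') * (∑ b', nYa u ℓ b') := by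
      rw [← h]; ring
    have h'' := mul_left_cancel₀ (ne_of_gt (hULA u ℓ a)) h'
    rw [← h'']
    ring
  have hsum_nY : ∀ ℓ b m, (∑ u, nY u ℓ b m)
      = (∑ u', p u' ℓ b m) / (∑ u', ∑ m', p u' ℓ b m')
          * ∑ u, (∑ m', p u ℓ b m') * g u ℓ m := by
    intro ℓ b m
    rw [Finset.mul_sum]
    refine Finset.sum_congr rfl (fun u _ => ?_)
    rw [key2 u ℓ b m, key1 u ℓ b m]
    ring
  have hterm : ∀ ℓ b m,
      ((∑ u, nY u ℓ b m) / (∑ u, p u ℓ b m))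
          * ((∑ u, ∑ m', p u ℓ b m') / (∑ u, ∑ b', ∑ m', p u ℓ b' m'))
        = (∑ u, (∑ m', p u ℓ b m') * g u ℓ m) / (∑ u, ∑ b', ∑ m', p u ℓ b' m') := by
    intro ℓ b m
    rw [hsum_nY ℓ b m]
    have e1 := ne_of_gt (hMLA ℓ b m)
    have e2 := ne_of_gt (hLA ℓ b)
    calc ((∑ u', p u' ℓ b m) / (∑ u', ∑ m', p u' ℓ b m')
            * (∑ u, (∑ m', p u ℓ b m') * g u ℓ m)) / (∑ u, p u ℓ b m)
          * ((∑ u, ∑ m', p u ℓ b m') / (∑ u, ∑ b', ∑ m', p u ℓ b' m'))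
        = (∑ u, (∑ m', p u ℓ b m') * g u ℓ m)
            * (((∑ u, p u ℓ b m) / (∑ u, p u ℓ b m))
              * ((∑ u, ∑ m', p u ℓ b m') / (∑ u, ∑ m', p u ℓ b m')))
            / (∑ u, ∑ b', ∑ m', p u ℓ b' m') := by ring
      _ = (∑ u, (∑ m', p u ℓ b m') * g u ℓ m) / (∑ u, ∑ b', ∑ m', p u ℓ b' m') := by
          rw [div_self e1, div_self e2]; ring
  -- rewrite RHS
  have hRHS : ∀ ℓ m,
      ((∑ u, p u ℓ a m) / (∑ u, ∑ m', p u ℓ a m'))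
        * (∑ b, ((∑ u, nY u ℓ b m) / (∑ u, p u ℓ b m))
              * ((∑ u, ∑ m', p u ℓ b m') / (∑ u, ∑ b', ∑ m', p u ℓ b' m')))
        * (∑ u, ∑ b', ∑ m', p u ℓ b' m')
      = ∑ u, (∑ b, ∑ m', p u ℓ b m')
              * ((∑ u', p u' ℓ a m) / (∑ u', ∑ m', p u' ℓ a m') * g u ℓ m) := by
    intro ℓ m
    rw [Finset.sum_congr rfl (fun b _ => hterm ℓ b m), ← Finset.sum_div]
    have hZZ : (∑ b, ∑ u, (∑ m', p u ℓ b m') * g u ℓ m)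
        = ∑ u, (∑ b, ∑ m', p u ℓ b m') * g u ℓ m := by
      calc (∑ b, ∑ u, (∑ m', p u ℓ b m') * g u ℓ m)
          = ∑ u, ∑ b, (∑ m', p u ℓ b m') * g u ℓ m := Finset.sum_comm
        _ = ∑ u, (∑ b, ∑ m', p u ℓ b m') * g u ℓ m :=
            Finset.sum_congr rfl (fun u _ => (Finset.sum_mul _ _ _).symm)
    rw [hZZ]
    have e3 := ne_of_gt (hL ℓ)
    calc ((∑ u, p u ℓ a m) / (∑ u, ∑ m', p u ℓ a m'))
          * ((∑ u, (∑ b, ∑ m', p u ℓ b m') * g u ℓ m) / (∑ u, ∑ b', ∑ m', p u ℓ b' m'))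
          * (∑ u, ∑ b', ∑ m', p u ℓ b' m')
        = ((∑ u, p u ℓ a m) / (∑ u, ∑ m', p u ℓ a m'))
            * (∑ u, (∑ b, ∑ m', p u ℓ b m') * g u ℓ m)
            * ((∑ u, ∑ b', ∑ m', p u ℓ b' m') / (∑ u, ∑ b', ∑ m', p u ℓ b' m')) := by ring
      _ = ((∑ u, p u ℓ a m) / (∑ u, ∑ m', p u ℓ a m'))
            * (∑ u, (∑ b, ∑ m', p u ℓ b m') * g u ℓ m) := by rw [div_self e3]; ring
      _ = ∑ u, (∑ b, ∑ m', p u ℓ b m')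
              * ((∑ u', p u' ℓ a m) / (∑ u', ∑ m', p u' ℓ a m') * g u ℓ m) := by
          rw [Finset.mul_sum]
          exact Finset.sum_congr rfl (fun u _ => by ring)
  calc (∑ u, ∑ ℓ, ∑ b, nYa u ℓ b)
      = ∑ u, ∑ ℓ, (∑ b, ∑ m', p u ℓ b m')
          * ∑ m, (∑ u', p u' ℓ a m) / (∑ u', ∑ m', p u' ℓ a m') * g u ℓ m :=
        Finset.sum_congr rfl (fun u _ => Finset.sum_congr rfl (fun ℓ _ => hT u ℓ))
    _ = ∑ ℓ, ∑ u, (∑ b, ∑ m', p u ℓ b m')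
          * ∑ m, (∑ u', p u' ℓ a m) / (∑ u', ∑ m', p u' ℓ a m') * g u ℓ m :=
        Finset.sum_comm
    _ = ∑ ℓ, ∑ u, ∑ m, (∑ b, ∑ m', p u ℓ b m')
          * ((∑ u', p u' ℓ a m) / (∑ u', ∑ m', p u' ℓ a m') * g u ℓ m) :=
        Finset.sum_congr rfl (fun ℓ _ => Finset.sum_congr rfl (fun u _ => by
          rw [Finset.mul_sum]))
    _ = ∑ ℓ, ∑ m, ∑ u, (∑ b, ∑ m', p u ℓ b m')
          * ((∑ u', p u' ℓ a m) / (∑ u', ∑ m', p u' ℓ a m') * g u ℓ m) :=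
        Finset.sum_congr rfl (fun ℓ _ => Finset.sum_comm)
    _ = ∑ ℓ, ∑ m,
          ((∑ u, p u ℓ a m) / (∑ u, ∑ m', p u ℓ a m'))
            * (∑ b, ((∑ u, nY u ℓ b m) / (∑ u, p u ℓ b m))
                  * ((∑ u, ∑ m', p u ℓ b m') / (∑ u, ∑ b', ∑ m', p u ℓ b' m')))
            * (∑ u, ∑ b', ∑ m', p u ℓ b' m') :=
        Finset.sum_congr rfl (fun ℓ _ => Finset.sum_congr rfl (fun m _ => (hRHS ℓ m).symm))


end FD

/-- front-door formula (point treatment, discrete case):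
`E[Y(a)] = Σ_{ℓ,m} p(m | ℓ, a) [Σ_{a'} E[Y | ℓ, a', m] p(a' | ℓ)] p(ℓ)`. -/
theorem frontdoor_identification
    {Ω 𝓤 𝓛 𝓜 : Type} [Fintype Ω] [Fintype 𝓤] [Fintype 𝓛] [Fintype 𝓜]
    (w : Ω → ℝ) (hw : ∀ ω, 0 ≤ w ω) (hw1 : ∑ ω, w ω = 1)
    (U : Ω → 𝓤) (L : Ω → 𝓛) (A : Ω → Bool) (M : Ω → 𝓜) (Y : Ω → ℝ)
    (a : Bool) (Ya : Ω → ℝ)  -- the counterfactual outcome Y(a)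
    -- positivity: all conditioning events have positive probability
    (hpos : ∀ (u : 𝓤) (ℓ : 𝓛) (a'' : Bool) (m : 𝓜),
      0 < Pr w (fun ω => U ω = u ∧ L ω = ℓ ∧ A ω = a'' ∧ M ω = m))
    -- (i) M ⫫ U | A, L
    (hMU : ∀ (u : 𝓤) (ℓ : 𝓛) (a'' : Bool) (m : 𝓜),
      cPr w (fun ω => M ω = m) (fun ω => U ω = u ∧ A ω = a'' ∧ L ω = ℓ)
        = cPr w (fun ω => M ω = m) (fun ω => A ω = a'' ∧ L ω = ℓ))
    -- (ii) Y ⫫ A | U, M, L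
    (hYA : ∀ (y : ℝ) (u : 𝓤) (ℓ : 𝓛) (a'' : Bool) (m : 𝓜),
      cPr w (fun ω => Y ω = y) (fun ω => U ω = u ∧ M ω = m ∧ L ω = ℓ ∧ A ω = a'')
        = cPr w (fun ω => Y ω = y) (fun ω => U ω = u ∧ M ω = m ∧ L ω = ℓ))
    -- (iii) Y(a) ⫫ A | U, L
    (hYaA : ∀ (y : ℝ) (u : 𝓤) (ℓ : 𝓛) (a'' : Bool),
      cPr w (fun ω => Ya ω = y) (fun ω => U ω = u ∧ L ω = ℓ ∧ A ω = a'')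
        = cPr w (fun ω => Ya ω = y) (fun ω => U ω = u ∧ L ω = ℓ))
    -- consistency: A = a implies Y(a) = Y
    (hcons : ∀ ω, A ω = a → Ya ω = Y ω) :
    Exp w Ya
      = ∑ ℓ : 𝓛, ∑ m : 𝓜,
          cPr w (fun ω => M ω = m) (fun ω => L ω = ℓ ∧ A ω = a)
            * (∑ a' : Bool,
                cExp w Y (fun ω => L ω = ℓ ∧ A ω = a' ∧ M ω = m)
                  * cPr w (fun ω => A ω = a') (fun ω => L ω = ℓ))
            * Pr w (fun ω => L ω = ℓ) := by
  -- nonemptiness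
  have hne : Nonempty Ω := by
    by_contra h
    rw [not_nonempty_iff] at h
    rw [Finset.univ_eq_empty, Finset.sum_empty] at hw1
    exact one_ne_zero hw1.symm
  obtain ⟨ω0⟩ := hne
  haveI : Nonempty 𝓤 := ⟨U ω0⟩
  haveI : Nonempty 𝓛 := ⟨L ω0⟩
  haveI : Nonempty 𝓜 := ⟨M ω0⟩
  -- cell probabilities and numerators
  set p : 𝓤 → 𝓛 → Bool → 𝓜 → ℝ := fun u ℓ b m =>
    Pr w (fun ω => U ω = u ∧ L ω = ℓ ∧ A ω = b ∧ M ω = m) with hpdef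
  set nY : 𝓤 → 𝓛 → Bool → 𝓜 → ℝ := fun u ℓ b m =>
    FD.S (fun ω => Y ω * w ω) (fun ω => U ω = u ∧ L ω = ℓ ∧ A ω = b ∧ M ω = m) with hnYdef
  set nYa : 𝓤 → 𝓛 → Bool → ℝ := fun u ℓ b =>
    FD.S (fun ω => Ya ω * w ω) (fun ω => U ω = u ∧ L ω = ℓ ∧ A ω = b) with hnYadef
  have hp : ∀ u ℓ b m, 0 < p u ℓ b m := hpos
  -- basic positivity of marginals
  have hULA : ∀ u ℓ b, 0 < ∑ m, p u ℓ b m := fun u ℓ b =>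
    Finset.sum_pos (fun m _ => hp u ℓ b m) Finset.univ_nonempty
  have hMLA : ∀ ℓ b m, 0 < ∑ u, p u ℓ b m := fun ℓ b m =>
    Finset.sum_pos (fun u _ => hp u ℓ b m) Finset.univ_nonempty
  have hLA : ∀ ℓ b, 0 < ∑ u, ∑ m, p u ℓ b m := fun ℓ b =>
    Finset.sum_pos (fun u _ => hULA u ℓ b) Finset.univ_nonempty
  have hPB : ∀ u ℓ m, 0 < ∑ b, p u ℓ b m := fun u ℓ m =>
    Finset.sum_pos (fun b _ => hp u ℓ b m) Finset.univ_nonempty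
  have hUL : ∀ u ℓ, 0 < ∑ b, ∑ m, p u ℓ b m := fun u ℓ =>
    Finset.sum_pos (fun b _ => hULA u ℓ b) Finset.univ_nonempty
  -- decomposition lemmas
  have dULA : ∀ u ℓ b, Pr w (fun ω => U ω = u ∧ L ω = ℓ ∧ A ω = b) = ∑ m, p u ℓ b m := by
    intro u ℓ b
    rw [FD.Pr_eq_S, FD.S_split _ _ M]
    refine Finset.sum_congr rfl (fun m _ => ?_)
    simp only [hpdef]
    exact FD.S_congr (fun ω => by tauto)
  have dUL : ∀ u ℓ, Pr w (fun ω => U ω = u ∧ L ω = ℓ) = ∑ b, ∑ m, p u ℓ b m := by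
    intro u ℓ
    rw [FD.Pr_eq_S, FD.S_split _ _ A]
    refine Finset.sum_congr rfl (fun b _ => ?_)
    have e : FD.S w (fun ω => (U ω = u ∧ L ω = ℓ) ∧ A ω = b)
        = Pr w (fun ω => U ω = u ∧ L ω = ℓ ∧ A ω = b) := FD.S_congr (fun ω => by tauto)
    rw [e, dULA]
  have dUAL : ∀ u ℓ b, Pr w (fun ω => U ω = u ∧ A ω = b ∧ L ω = ℓ) = ∑ m, p u ℓ b m := by
    intro u ℓ b
    have e : Pr w (fun ω => U ω = u ∧ A ω = b ∧ L ω = ℓ)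
        = Pr w (fun ω => U ω = u ∧ L ω = ℓ ∧ A ω = b) := FD.S_congr (fun ω => by tauto)
    rw [e, dULA]
  have dAL : ∀ ℓ b, Pr w (fun ω => A ω = b ∧ L ω = ℓ) = ∑ u, ∑ m, p u ℓ b m := by
    intro ℓ b
    rw [FD.Pr_eq_S, FD.S_split _ _ U]
    refine Finset.sum_congr rfl (fun u _ => ?_)
    have e : FD.S w (fun ω => (A ω = b ∧ L ω = ℓ) ∧ U ω = u)
        = Pr w (fun ω => U ω = u ∧ L ω = ℓ ∧ A ω = b) := FD.S_congr (fun ω => by tauto)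
    rw [e, dULA]
  have dLA : ∀ ℓ b, Pr w (fun ω => L ω = ℓ ∧ A ω = b) = ∑ u, ∑ m, p u ℓ b m := by
    intro ℓ b
    have e : Pr w (fun ω => L ω = ℓ ∧ A ω = b)
        = Pr w (fun ω => A ω = b ∧ L ω = ℓ) := FD.S_congr (fun ω => by tauto)
    rw [e, dAL]
  have dL : ∀ ℓ, Pr w (fun ω => L ω = ℓ) = ∑ u, ∑ b, ∑ m, p u ℓ b m := by
    intro ℓ
    rw [FD.Pr_eq_S, FD.S_split _ _ U]
    refine Finset.sum_congr rfl (fun u _ => ?_)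
    have e : FD.S w (fun ω => L ω = ℓ ∧ U ω = u)
        = Pr w (fun ω => U ω = u ∧ L ω = ℓ) := FD.S_congr (fun ω => by tauto)
    rw [e, dUL]
  -- h1 from hMU
  have h1 : ∀ u ℓ b m, p u ℓ b m * (∑ u', ∑ m', p u' ℓ b m')
      = (∑ m', p u ℓ b m') * (∑ u', p u' ℓ b m) := by
    intro u ℓ b m
    have h : Pr w (fun ω => M ω = m ∧ U ω = u ∧ A ω = b ∧ L ω = ℓ)
          / Pr w (fun ω => U ω = u ∧ A ω = b ∧ L ω = ℓ)
        = Pr w (fun ω => M ω = m ∧ A ω = b ∧ L ω = ℓ)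
          / Pr w (fun ω => A ω = b ∧ L ω = ℓ) := hMU u ℓ b m
    have e1 : Pr w (fun ω => M ω = m ∧ U ω = u ∧ A ω = b ∧ L ω = ℓ) = p u ℓ b m := by
      simp only [hpdef]; exact FD.S_congr (fun ω => by tauto)
    have e2 : Pr w (fun ω => M ω = m ∧ A ω = b ∧ L ω = ℓ) = ∑ u', p u' ℓ b m := by
      rw [FD.Pr_eq_S, FD.S_split _ _ U]
      refine Finset.sum_congr rfl (fun u' _ => ?_)
      simp only [hpdef]
      exact FD.S_congr (fun ω => by tauto)
    rw [e1, e2, dUAL, dAL] at h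
    rw [div_eq_div_iff (ne_of_gt (hULA u ℓ b)) (ne_of_gt (hLA ℓ b))] at h
    rw [h]; ring
  -- h2 from hYA
  have h2 : ∀ u ℓ b m, nY u ℓ b m * (∑ b', p u ℓ b' m)
      = p u ℓ b m * (∑ b', nY u ℓ b' m) := by
    intro u ℓ b m
    have h : FD.S (fun ω => Y ω * w ω) (fun ω => U ω = u ∧ M ω = m ∧ L ω = ℓ ∧ A ω = b)
          / Pr w (fun ω => U ω = u ∧ M ω = m ∧ L ω = ℓ ∧ A ω = b)
        = FD.S (fun ω => Y ω * w ω) (fun ω => U ω = u ∧ M ω = m ∧ L ω = ℓ)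
          / Pr w (fun ω => U ω = u ∧ M ω = m ∧ L ω = ℓ) :=
      FD.cExp_eq_of_cPr (fun y => hYA y u ℓ b m)
    have e1 : FD.S (fun ω => Y ω * w ω) (fun ω => U ω = u ∧ M ω = m ∧ L ω = ℓ ∧ A ω = b)
        = nY u ℓ b m := by
      simp only [hnYdef]; exact FD.S_congr (fun ω => by tauto)
    have e2 : FD.S (fun ω => Y ω * w ω) (fun ω => U ω = u ∧ M ω = m ∧ L ω = ℓ)
        = ∑ b', nY u ℓ b' m := by
      rw [FD.S_split _ _ A]
      refine Finset.sum_congr rfl (fun b' _ => ?_)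
      simp only [hnYdef]
      exact FD.S_congr (fun ω => by tauto)
    have e3 : Pr w (fun ω => U ω = u ∧ M ω = m ∧ L ω = ℓ ∧ A ω = b) = p u ℓ b m := by
      simp only [hpdef]; exact FD.S_congr (fun ω => by tauto)
    have e4 : Pr w (fun ω => U ω = u ∧ M ω = m ∧ L ω = ℓ) = ∑ b', p u ℓ b' m := by
      rw [FD.Pr_eq_S, FD.S_split _ _ A]
      refine Finset.sum_congr rfl (fun b' _ => ?_)
      simp only [hpdef]
      exact FD.S_congr (fun ω => by tauto)
    rw [e1, e2, e3, e4] at h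
    rw [div_eq_div_iff (ne_of_gt (hp u ℓ b m)) (ne_of_gt (hPB u ℓ m))] at h
    rw [h]; ring
  -- h3 from hYaA
  have h3 : ∀ u ℓ b, nYa u ℓ b * (∑ b', ∑ m', p u ℓ b' m')
      = (∑ m', p u ℓ b m') * (∑ b', nYa u ℓ b') := by
    intro u ℓ b
    have h : FD.S (fun ω => Ya ω * w ω) (fun ω => U ω = u ∧ L ω = ℓ ∧ A ω = b)
          / Pr w (fun ω => U ω = u ∧ L ω = ℓ ∧ A ω = b)
        = FD.S (fun ω => Ya ω * w ω) (fun ω => U ω = u ∧ L ω = ℓ)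
          / Pr w (fun ω => U ω = u ∧ L ω = ℓ) :=
      FD.cExp_eq_of_cPr (fun y => hYaA y u ℓ b)
    have e1 : FD.S (fun ω => Ya ω * w ω) (fun ω => U ω = u ∧ L ω = ℓ ∧ A ω = b)
        = nYa u ℓ b := by simp only [hnYadef]
    have e2 : FD.S (fun ω => Ya ω * w ω) (fun ω => U ω = u ∧ L ω = ℓ)
        = ∑ b', nYa u ℓ b' := by
      rw [FD.S_split _ _ A]
      refine Finset.sum_congr rfl (fun b' _ => ?_)
      simp only [hnYadef]
      exact FD.S_congr (fun ω => by tauto)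
    rw [e1, e2, dULA, dUL] at h
    rw [div_eq_div_iff (ne_of_gt (hULA u ℓ b)) (ne_of_gt (hUL u ℓ))] at h
    rw [h]; ring
  -- h4 from consistency
  have h4 : ∀ u ℓ, nYa u ℓ a = ∑ m, nY u ℓ a m := by
    intro u ℓ
    rw [hnYadef]
    show FD.S (fun ω => Ya ω * w ω) (fun ω => U ω = u ∧ L ω = ℓ ∧ A ω = a)
        = ∑ m, nY u ℓ a m
    rw [FD.S_split _ _ M]
    refine Finset.sum_congr rfl (fun m _ => ?_)
    have e1 : FD.S (fun ω => Ya ω * w ω)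
          (fun ω => (U ω = u ∧ L ω = ℓ ∧ A ω = a) ∧ M ω = m)
        = FD.S (fun ω => Ya ω * w ω)
          (fun ω => U ω = u ∧ L ω = ℓ ∧ A ω = a ∧ M ω = m) :=
      FD.S_congr (fun ω => by tauto)
    have e2 : FD.S (fun ω => Ya ω * w ω)
          (fun ω => U ω = u ∧ L ω = ℓ ∧ A ω = a ∧ M ω = m)
        = FD.S (fun ω => Y ω * w ω)
          (fun ω => U ω = u ∧ L ω = ℓ ∧ A ω = a ∧ M ω = m) :=
      FD.S_congr_on (fun ω hω => congrArg (fun t => t * w ω) (hcons ω hω.2.2.1))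
    rw [e1, e2]
  -- expectation decomposition
  have eLHS : Exp w Ya = ∑ u, ∑ ℓ, ∑ b, nYa u ℓ b := by
    have e0 : Exp w Ya = FD.S (fun ω => Ya ω * w ω) (fun _ => True) := by
      unfold Exp FD.S; simp
    rw [e0, FD.S_split _ _ U]
    refine Finset.sum_congr rfl (fun u _ => ?_)
    rw [FD.S_split _ _ L]
    refine Finset.sum_congr rfl (fun ℓ _ => ?_)
    rw [FD.S_split _ _ A]
    refine Finset.sum_congr rfl (fun b _ => ?_)
    simp only [hnYadef]
    exact FD.S_congr (fun ω => by tauto)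
  -- goal-side conversions
  have gM : ∀ ℓ m, cPr w (fun ω => M ω = m) (fun ω => L ω = ℓ ∧ A ω = a)
      = (∑ u, p u ℓ a m) / (∑ u, ∑ m', p u ℓ a m') := by
    intro ℓ m
    show Pr w (fun ω => M ω = m ∧ L ω = ℓ ∧ A ω = a)
        / Pr w (fun ω => L ω = ℓ ∧ A ω = a) = _
    have e1 : Pr w (fun ω => M ω = m ∧ L ω = ℓ ∧ A ω = a) = ∑ u, p u ℓ a m := by
      rw [FD.Pr_eq_S, FD.S_split _ _ U]
      refine Finset.sum_congr rfl (fun u _ => ?_)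
      simp only [hpdef]
      exact FD.S_congr (fun ω => by tauto)
    rw [e1, dLA]
  have gY : ∀ ℓ b m, cExp w Y (fun ω => L ω = ℓ ∧ A ω = b ∧ M ω = m)
      = (∑ u, nY u ℓ b m) / (∑ u, p u ℓ b m) := by
    intro ℓ b m
    show FD.S (fun ω => Y ω * w ω) (fun ω => L ω = ℓ ∧ A ω = b ∧ M ω = m)
        / Pr w (fun ω => L ω = ℓ ∧ A ω = b ∧ M ω = m) = _
    have e1 : FD.S (fun ω => Y ω * w ω) (fun ω => L ω = ℓ ∧ A ω = b ∧ M ω = m)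
        = ∑ u, nY u ℓ b m := by
      rw [FD.S_split _ _ U]
      refine Finset.sum_congr rfl (fun u _ => ?_)
      simp only [hnYdef]
      exact FD.S_congr (fun ω => by tauto)
    have e2 : Pr w (fun ω => L ω = ℓ ∧ A ω = b ∧ M ω = m) = ∑ u, p u ℓ b m := by
      rw [FD.Pr_eq_S, FD.S_split _ _ U]
      refine Finset.sum_congr rfl (fun u _ => ?_)
      simp only [hpdef]
      exact FD.S_congr (fun ω => by tauto)
    rw [e1, e2]
  have gA : ∀ ℓ b, cPr w (fun ω => A ω = b) (fun ω => L ω = ℓ)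
      = (∑ u, ∑ m', p u ℓ b m') / (∑ u, ∑ b', ∑ m', p u ℓ b' m') := by
    intro ℓ b
    show Pr w (fun ω => A ω = b ∧ L ω = ℓ) / Pr w (fun ω => L ω = ℓ) = _
    rw [dAL, dL]
  -- put it together
  calc Exp w Ya
      = ∑ u, ∑ ℓ, ∑ b, nYa u ℓ b := eLHS
    _ = ∑ ℓ, ∑ m,
          ((∑ u, p u ℓ a m) / (∑ u, ∑ m', p u ℓ a m'))
            * (∑ b, ((∑ u, nY u ℓ b m) / (∑ u, p u ℓ b m))
                  * ((∑ u, ∑ m', p u ℓ b m') / (∑ u, ∑ b', ∑ m', p u ℓ b' m')))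
            * (∑ u, ∑ b', ∑ m', p u ℓ b' m') :=
        FD.frontdoor_algebra a p nY nYa hp h1 h2 h3 h4
    _ = ∑ ℓ : 𝓛, ∑ m : 𝓜,
          cPr w (fun ω => M ω = m) (fun ω => L ω = ℓ ∧ A ω = a)
            * (∑ a' : Bool,
                cExp w Y (fun ω => L ω = ℓ ∧ A ω = a' ∧ M ω = m)
                  * cPr w (fun ω => A ω = a') (fun ω => L ω = ℓ))
            * Pr w (fun ω => L ω = ℓ) := by
        refine Finset.sum_congr rfl (fun ℓ _ => Finset.sum_congr rfl (fun m _ => ?_))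
        rw [gM, dL]
        refine congrArg₂ _ (congrArg₂ _ rfl ?_) rfl
        exact Finset.sum_congr rfl (fun b _ => by rw [gY, gA])
end
end
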